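/- arXiv:2101.02154 — 4 statements merged into one kernel-verified Lean document; each statement's English description precedes it below -/
import Mathlib

section
/- Let d ≥ 1 and let K ⊆ ℝ^d be a nonempty compact set. For all a, ζ ∈ ℝ^d with ‖a‖ = ‖ζ‖ = 1 there exist x₀ ∈ K and ξ ∈ ℝ^d with ‖ξ‖ = 1 such that: (i) ⟨x₀, ξ⟩ = sup_{y ∈ K} ⟨y, ξ⟩; (ii) ⟨a, ξ⟩ ≠ 0; (iii) either ⟨a, ξ⟩ < 0 and a − 2⟨a, ξ⟩·ξ = ζ, or ⟨a, ξ⟩ > 0 and ζ = a; (iv) x₀ + t·ζ ∉ K for every t > 0. -/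
/-!
Choose a unit normal `ξ` with `⟪ζ, ξ⟫ > 0` and let `x₀` maximise `⟪·, ξ⟫` on `K`; then
`⟪x₀ + t • ζ, ξ⟫ > ⟪x₀, ξ⟫` for `t > 0`, so the ray leaves `K` at once. If `ζ = a` take
`ξ = a` (shadow point). Otherwise take `ξ` along `ζ - a`: since `‖a‖ = ‖ζ‖`, the reflection
in the hyperplane `ξᗮ` swaps `a` and `ζ`, and `⟪a, ξ⟫ = -‖ζ - a‖ / 2 < 0 < ⟪ζ, ξ⟫`.
-/

open scoped RealInnerProductSpace

section

variable {E : Type*} [NormedAddCommGroup E] [InnerProductSpace ℝ E]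

theorem ray_notMem_of_isMaxOn_inner {K : Set E} {x₀ ξ ζ : E}
    (hmax : IsMaxOn (fun y => ⟪y, ξ⟫) K x₀) (hζξ : 0 < ⟪ζ, ξ⟫) {t : ℝ} (ht : 0 < t) :
    x₀ + t • ζ ∉ K := fun hmem => by
  have hle : ⟪x₀ + t • ζ, ξ⟫ ≤ ⟪x₀, ξ⟫ := hmax hmem
  rw [inner_add_left, real_inner_smul_left] at hle
  nlinarith

theorem IsCompact.exists_support_point_ray_notMem {K : Set E} (hK : IsCompact K)
    (hKne : K.Nonempty) {ξ ζ : E} (hζξ : 0 < ⟪ζ, ξ⟫) :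
    ∃ x₀ ∈ K, ⟪x₀, ξ⟫ = sSup ((fun y => ⟪y, ξ⟫) '' K) ∧
      ∀ t : ℝ, 0 < t → x₀ + t • ζ ∉ K := by
  obtain ⟨x₀, hx₀K, hsup, hmax⟩ :=
    hK.exists_sSup_image_eq_and_ge hKne (f := fun y => ⟪y, ξ⟫) (by fun_prop)
  exact ⟨x₀, hx₀K, hsup.symm, fun t ht => ray_notMem_of_isMaxOn_inner hmax hζξ ht⟩

theorem real_inner_sub_of_norm_eq {a ζ : E} (h : ‖a‖ = ‖ζ‖) :
    ⟪a, ζ - a⟫ = -‖ζ - a‖ ^ 2 / 2 := by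
  rw [norm_sub_sq_real, inner_sub_right, real_inner_self_eq_norm_sq, h, real_inner_comm]
  ring

theorem exists_unit_normal_reflecting_of_norm_eq {a ζ : E} (h : ‖a‖ = ‖ζ‖) (hne : ζ ≠ a) :
    ∃ ξ : E, ‖ξ‖ = 1 ∧ ⟪a, ξ⟫ < 0 ∧ 0 < ⟪ζ, ξ⟫ ∧ a - (2 * ⟪a, ξ⟫) • ξ = ζ := by
  have ha_sub := real_inner_sub_of_norm_eq h
  have hdiff : ⟪ζ, ζ - a⟫ - ⟪a, ζ - a⟫ = ‖ζ - a‖ ^ 2 := by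
    rw [← inner_sub_left, real_inner_self_eq_norm_sq]
  set n := ‖ζ - a‖
  have hn : 0 < n := norm_pos_iff.mpr (sub_ne_zero.mpr hne)
  have haξ : ⟪a, n⁻¹ • (ζ - a)⟫ = -n / 2 := by
    rw [real_inner_smul_right, ha_sub]
    field_simp
  have hζξ : ⟪ζ, n⁻¹ • (ζ - a)⟫ = n / 2 := by
    rw [real_inner_smul_right, show ⟪ζ, ζ - a⟫ = n ^ 2 / 2 by linarith]
    field_simp
  refine ⟨n⁻¹ • (ζ - a), ?_, by rw [haξ]; linarith, by rw [hζξ]; positivity, ?_⟩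
  · rw [norm_smul, norm_inv, norm_norm, inv_mul_cancel₀ hn.ne']
  · rw [haξ, smul_smul, show 2 * (-n / 2) * n⁻¹ = -1 by field_simp]
    simp

end

theorem stmt_4_general (d : ℕ)
    (K : Set (EuclideanSpace ℝ (Fin d))) (hKne : K.Nonempty) (hK : IsCompact K)
    (a ζ : EuclideanSpace ℝ (Fin d)) (ha : ‖a‖ = 1) (hζ : ‖ζ‖ = 1) :
    ∃ x₀ ∈ K, ∃ ξ : EuclideanSpace ℝ (Fin d), ‖ξ‖ = 1 ∧
      ⟪x₀, ξ⟫ = sSup ((fun y => ⟪y, ξ⟫) '' K) ∧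
      ⟪a, ξ⟫ ≠ 0 ∧
      ((⟪a, ξ⟫ < 0 ∧ a - (2 * ⟪a, ξ⟫) • ξ = ζ) ∨ (0 < ⟪a, ξ⟫ ∧ ζ = a)) ∧
      ∀ t : ℝ, 0 < t → x₀ + t • ζ ∉ K := by
  by_cases hζa : ζ = a
  · have haa : 0 < ⟪a, a⟫ := by rw [real_inner_self_eq_norm_sq, ha]; norm_num
    obtain ⟨x₀, hx₀K, hsup, hray⟩ :=
      hK.exists_support_point_ray_notMem hKne (ξ := a) (ζ := ζ) (by rwa [hζa])
    exact ⟨x₀, hx₀K, a, ha, hsup, haa.ne', Or.inr ⟨haa, hζa⟩, hray⟩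
  · obtain ⟨ξ, hξ, haξ, hζξ, hreflect⟩ :=
      exists_unit_normal_reflecting_of_norm_eq (ha.trans hζ.symm) hζa
    obtain ⟨x₀, hx₀K, hsup, hray⟩ := hK.exists_support_point_ray_notMem hKne hζξ
    exact ⟨x₀, hx₀K, ξ, hξ, hsup, haξ.ne, Or.inl ⟨haξ, hreflect⟩, hray⟩

/-- Lemma 5.4 (abstract form): for every incident unit direction `a` and every target
unit direction `ζ` there is a support point `x₀` of the compact set `K` with unit
normal `ξ`, non-tangential to `a`, such that `ζ` is obtained from `a` by specular
reflection in `ξ` (illuminated case) or `ζ = a` (shadow case), and the ray from `x₀`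
in direction `ζ` never meets `K` again. -/
theorem stmt_4 (d : ℕ) (hd : 1 ≤ d)
    (K : Set (EuclideanSpace ℝ (Fin d))) (hKne : K.Nonempty) (hK : IsCompact K)
    (a ζ : EuclideanSpace ℝ (Fin d)) (ha : ‖a‖ = 1) (hζ : ‖ζ‖ = 1) :
    ∃ x₀ ∈ K, ∃ ξ : EuclideanSpace ℝ (Fin d), ‖ξ‖ = 1 ∧
      ⟪x₀, ξ⟫ = sSup ((fun y => ⟪y, ξ⟫) '' K) ∧
      ⟪a, ξ⟫ ≠ 0 ∧
      ((⟪a, ξ⟫ < 0 ∧ a - (2 * ⟪a, ξ⟫) • ξ = ζ) ∨ (0 < ⟪a, ξ⟫ ∧ ζ = a)) ∧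
      ∀ t : ℝ, 0 < t → x₀ + t • ζ ∉ K :=
  stmt_4_general d K hKne hK a ζ ha hζ
end

section
/- Let n ≥ 1, ε₀ > 0, and let γ : B(0, ε₀) → ℝ be differentiable on the open ball B(0, ε₀) ⊆ ℝⁿ, with gradient ∇γ. Let A : ℝⁿ → ℝⁿ be a linear map and let Q > 0, K > 0 be such that ‖A v‖ ≥ Q‖v‖ for all v ∈ ℝⁿ and ‖∇γ(x) − ∇γ(0) − A x‖ ≤ K‖x‖² for all x ∈ B(0, ε₀). Then for every ε with 0 < ε ≤ min(ε₀, Q/(12K)), the set {x ∈ B(0, ε) : ‖∇γ(x)‖ ≥ Qε/12} has Lebesgue measure at least 6^{−n} times the Lebesgue measure of B(0, ε). -/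
open MeasureTheory

/-- Step 3 of the proof of Lemma 5.3: on a proportion at least `6^{-n}` of the ball
`B(0, ε)`, the gradient of a function with uniformly non-degenerate Hessian at `0`
(expressed via the linear map `A` and a first-order Taylor bound) is bounded below by
`Qε/12`, provided `ε ≤ min(ε₀, Q/(12K))`. -/
theorem stmt_7 (n : ℕ) (hn : 1 ≤ n) (ε₀ : ℝ) (hε₀ : 0 < ε₀)
    (γ : EuclideanSpace ℝ (Fin n) → ℝ)
    (hγ : ∀ x ∈ Metric.ball (0 : EuclideanSpace ℝ (Fin n)) ε₀, DifferentiableAt ℝ γ x)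
    (A : EuclideanSpace ℝ (Fin n) →ₗ[ℝ] EuclideanSpace ℝ (Fin n))
    (Q K : ℝ) (hQ : 0 < Q) (hK : 0 < K)
    (hA : ∀ v : EuclideanSpace ℝ (Fin n), Q * ‖v‖ ≤ ‖A v‖)
    (hTaylor : ∀ x ∈ Metric.ball (0 : EuclideanSpace ℝ (Fin n)) ε₀,
      ‖gradient γ x - gradient γ 0 - A x‖ ≤ K * ‖x‖ ^ 2) :
    ∀ ε : ℝ, 0 < ε → ε ≤ min ε₀ (Q / (12 * K)) →
      volume (Metric.ball (0 : EuclideanSpace ℝ (Fin n)) ε) / 6 ^ n ≤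
        volume {x : EuclideanSpace ℝ (Fin n) |
          x ∈ Metric.ball (0 : EuclideanSpace ℝ (Fin n)) ε ∧
            Q * ε / 12 ≤ ‖gradient γ x‖} := by
  intro ε hε hεle
  haveI : Nonempty (Fin n) := ⟨⟨0, hn⟩⟩
  have hεε₀ : ε ≤ ε₀ := hεle.trans (min_le_left _ _)
  have hεQK : ε ≤ Q / (12 * K) := hεle.trans (min_le_right _ _)
  have hKε : K * ε ≤ Q / 12 := by
    rw [le_div_iff₀ (by positivity)] at hεQK
    nlinarith
  set g := gradient γ 0 with hg
  set Ann : Set (EuclideanSpace ℝ (Fin n)) := Metric.ball 0 ε \ Metric.closedBall 0 (ε / 2) with hAnn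
  set S : Set (EuclideanSpace ℝ (Fin n)) := {x | x ∈ Ann ∧ Q * ε / 2 ≤ ‖g + A x‖} with hS
  -- pointwise bound on S
  have hSsub : S ⊆ {x : EuclideanSpace ℝ (Fin n) | x ∈ Metric.ball (0 : EuclideanSpace ℝ (Fin n)) ε ∧ Q * ε / 12 ≤ ‖gradient γ x‖} := by
    rintro x ⟨⟨hxball, -⟩, hxA⟩
    refine ⟨hxball, ?_⟩
    rw [mem_ball_zero_iff] at hxball
    have hx0 : x ∈ Metric.ball (0 : EuclideanSpace ℝ (Fin n)) ε₀ := by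
      rw [mem_ball_zero_iff]; exact hxball.trans_le hεε₀
    have hT := hTaylor x hx0
    have h1 : ‖g + A x‖ - ‖gradient γ x‖ ≤ ‖gradient γ x - g - A x‖ := by
      have h2 := norm_sub_norm_le (g + A x) (gradient γ x)
      rw [norm_sub_rev, sub_add_eq_sub_sub] at h2
      exact h2
    have hxn : (0:ℝ) ≤ ‖x‖ := norm_nonneg x
    have hx2 : ‖x‖ ^ 2 ≤ ε ^ 2 := by
      rw [sq, sq]; exact mul_le_mul hxball.le hxball.le hxn hε.le
    have h3 : K * ‖x‖ ^ 2 ≤ K * ε ^ 2 := mul_le_mul_of_nonneg_left hx2 hK.le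
    nlinarith [mul_le_mul_of_nonneg_right hKε hε.le]
  -- the annulus is covered by `S ∪ -S`
  have hcover : Ann ⊆ S ∪ Neg.neg ⁻¹' S := by
    intro x hx
    have hxann : x ∈ Ann := hx
    obtain ⟨hxb, hxc⟩ := hx
    rw [mem_ball_zero_iff] at hxb
    rw [Metric.mem_closedBall, dist_zero_right, not_le] at hxc
    have hnegann : -x ∈ Ann := by
      constructor
      · rw [mem_ball_zero_iff, norm_neg]; exact hxb
      · rw [Metric.mem_closedBall, dist_zero_right, norm_neg, not_le]; exact hxc
    have hAx : Q * ‖x‖ ≤ ‖A x‖ := hA x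
    have htri : 2 * ‖A x‖ ≤ ‖g + A x‖ + ‖g - A x‖ := by
      have := norm_sub_le (g + A x) (g - A x)
      have he : (g + A x) - (g - A x) = A x + A x := by abel
      rw [he] at this
      have h2 : ‖A x + A x‖ = 2 * ‖A x‖ := by
        rw [← two_smul ℝ, norm_smul]; simp
      linarith
    by_cases hcase : Q * ε / 2 ≤ ‖g + A x‖
    · exact Or.inl ⟨hxann, hcase⟩
    · right
      refine ⟨hnegann, ?_⟩
      rw [map_neg, ← sub_eq_add_neg]
      nlinarith
  -- measures
  set u : ENNReal := volume (Metric.ball (0 : EuclideanSpace ℝ (Fin n)) 1) with hu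
  have hfr : Module.finrank ℝ (EuclideanSpace ℝ (Fin n)) = n := finrank_euclideanSpace_fin
  have hb : volume (Metric.ball (0 : EuclideanSpace ℝ (Fin n)) ε) = ENNReal.ofReal (ε ^ n) * u := by
    rw [Measure.addHaar_ball volume (0 : EuclideanSpace ℝ (Fin n)) hε.le, hfr]
  have hc : volume (Metric.closedBall (0 : EuclideanSpace ℝ (Fin n)) (ε / 2)) = ENNReal.ofReal ((ε / 2) ^ n) * u := by
    rw [Measure.addHaar_closedBall volume (0 : EuclideanSpace ℝ (Fin n)) (by positivity : (0:ℝ) ≤ ε / 2), hfr]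
  set b := volume (Metric.ball (0 : EuclideanSpace ℝ (Fin n)) ε) with hbdef
  set c := volume (Metric.closedBall (0 : EuclideanSpace ℝ (Fin n)) (ε / 2)) with hcdef
  have hcfin : c ≠ ⊤ := measure_closedBall_lt_top.ne
  have h2c : c + c ≤ b := by
    rw [hb, hc, ← add_mul]
    gcongr
    rw [← ENNReal.ofReal_add (by positivity) (by positivity)]
    apply ENNReal.ofReal_le_ofReal
    have h2n : (2:ℝ) ≤ 2 ^ n := le_self_pow₀ one_le_two (by omega)
    have hεn : (0:ℝ) < ε ^ n := by positivity
    calc (ε / 2) ^ n + (ε / 2) ^ n = ε ^ n * (2 / 2 ^ n) := by rw [div_pow]; ring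
      _ ≤ ε ^ n * 1 :=
        mul_le_mul_of_nonneg_left ((div_le_one (by positivity)).mpr h2n) hεn.le
      _ = ε ^ n := mul_one _
  have hbac : b ≤ volume Ann + c := by
    refine le_trans (measure_mono ?_) (measure_union_le _ _)
    intro x hx
    by_cases h : x ∈ Metric.closedBall (0 : EuclideanSpace ℝ (Fin n)) (ε / 2)
    · exact Or.inr h
    · exact Or.inl ⟨hx, h⟩
  have hca : c ≤ volume Ann := by
    have := h2c.trans hbac
    rwa [add_comm (volume Ann) c, ENNReal.add_le_add_iff_left hcfin] at this
  have haS : volume Ann ≤ volume S + volume S := by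
    calc volume Ann ≤ volume (S ∪ Neg.neg ⁻¹' S) := measure_mono hcover
      _ ≤ volume S + volume (Neg.neg ⁻¹' S) := measure_union_le _ _
      _ = volume S + volume S := by rw [Measure.measure_preimage_neg]
  have hb4 : b ≤ 4 * volume S := by
    calc b ≤ volume Ann + c := hbac
      _ ≤ volume Ann + volume Ann := by gcongr
      _ ≤ (volume S + volume S) + (volume S + volume S) := by gcongr
      _ = 4 * volume S := by ring
  have h46 : (4 : ENNReal) ≤ 6 ^ n := by
    calc (4 : ENNReal) ≤ 6 ^ 1 := by norm_num
      _ ≤ 6 ^ n := pow_le_pow_right₀ (by norm_num) hn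
  have hfinal : b / 6 ^ n ≤ volume S := by
    rw [ENNReal.div_le_iff_le_mul (Or.inl (by positivity)) (Or.inl (by simp))]
    calc b ≤ 4 * volume S := hb4
      _ ≤ 6 ^ n * volume S := by gcongr
      _ = volume S * 6 ^ n := mul_comm _ _
  exact hfinal.trans (measure_mono hSsub)
end

section
/- Let (X, 𝔄, μ) be a measure space and φ : ℝ → X → X a flow (φ₀ = id, φ_{s+t} = φ_s ∘ φ_t for all s, t ∈ ℝ) such that the map (t, x) ↦ φ_t(x) is measurable (with ℝ carrying the Borel σ-algebra) and each φ_t is measure preserving, i.e. μ(φ_t^{−1}(A)) = μ(A) for all A ∈ 𝔄 and t ∈ ℝ. Let A ∈ 𝔄 and let 0 < T₀ ≤ T₁ be such that φ_{−t}(x) ∉ A whenever x ∈ A and t ∈ [T₀, T₁]. Let B ∈ 𝔄 satisfy φ_t^{−1}(A) ⊆ B for every t ∈ [T₀, T₁]. Then (T₁ − T₀)·μ(A) ≤ T₀·μ(B). -/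
/-!
Count the pairs `(t, x)` with `t ∈ [T₀, T₁]`, `x ∈ B` and `φ_t x ∈ A` with respect to
`Leb ⊗ μ|_B`. Slicing in `t`, flow invariance gives `μ(B ∩ φ_t⁻¹ A) = μ(A)` for each `t`, so the
count is `(T₁ - T₀) μ(A)`. Slicing in `x`, the times `t ∈ [T₀, T₁]` at which `φ_t x` visits `A` are
pairwise less than `T₀` apart (a later visit at `t` would send `φ_t x ∈ A` back into `A` after the
lag `t - s ∈ [T₀, T₁]`), so each slice has length at most `T₀` and the count is at most `T₀ μ(B)`.
-/

open MeasureTheory Set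

lemma Real.volume_le_ofReal_of_forall_sub_le {S : Set ℝ} {T : ℝ}
    (h : ∀ s ∈ S, ∀ t ∈ S, t - s ≤ T) : volume S ≤ ENNReal.ofReal T := by
  refine (Real.volume_le_diam S).trans (Metric.ediam_le fun s hs t ht => ?_)
  rw [edist_dist, Real.dist_eq]
  exact ENNReal.ofReal_le_ofReal (abs_sub_le_iff.2 ⟨h t ht s hs, h s hs t ht⟩)

def visitTimes {X : Type*} (φ : ℝ → X → X) (A : Set X) (T₀ T₁ : ℝ) (x : X) : Set ℝ :=
  {t ∈ Icc T₀ T₁ | φ t x ∈ A}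

section Flow

variable {X : Type*} {φ : ℝ → X → X}

lemma flow_neg_sub_apply (hφadd : ∀ s t : ℝ, φ (s + t) = φ s ∘ φ t) (s t : ℝ) (x : X) :
    φ (-(t - s)) (φ t x) = φ s x := by
  rw [← Function.comp_apply (f := φ (-(t - s))), ← hφadd, neg_sub, sub_add_cancel]

lemma volume_visitTimes_le (hφadd : ∀ s t : ℝ, φ (s + t) = φ s ∘ φ t) {A : Set X} {T₀ T₁ : ℝ}
    (hT₀ : 0 ≤ T₀) (hA : ∀ x ∈ A, ∀ t ∈ Icc T₀ T₁, φ (-t) x ∉ A) (x : X) :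
    volume (visitTimes φ A T₀ T₁ x) ≤ ENNReal.ofReal T₀ := by
  refine Real.volume_le_ofReal_of_forall_sub_le fun s ⟨hs, hsA⟩ t ⟨ht, htA⟩ => ?_
  by_contra! hlag
  have hlag_mem : t - s ∈ Icc T₀ T₁ := ⟨hlag.le, by linarith [ht.2, hs.1]⟩
  exact hA _ htA _ hlag_mem (flow_neg_sub_apply hφadd s t x ▸ hsA)

end Flow

section Measure

variable {X : Type*} [MeasurableSpace X] {φ : ℝ → X → X} {A : Set X} {T₀ T₁ : ℝ}

lemma restrict_prod_apply_uncurry_preimage_eq {μ : Measure X} {B : Set X}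
    [SFinite (μ.restrict B)] (hφmeas : Measurable (Function.uncurry φ))
    (hφpres : ∀ (t : ℝ) (A : Set X), MeasurableSet A → μ (φ t ⁻¹' A) = μ A)
    (hAmeas : MeasurableSet A) (hB : ∀ t ∈ Icc T₀ T₁, φ t ⁻¹' A ⊆ B) :
    (volume.restrict (Icc T₀ T₁)).prod (μ.restrict B) (Function.uncurry φ ⁻¹' A) =
      ENNReal.ofReal (T₁ - T₀) * μ A := by
  have hslice : ∀ t ∈ Icc T₀ T₁, μ.restrict B (φ t ⁻¹' A) = μ A := fun t ht => by
    rw [Measure.restrict_apply (hφmeas.of_uncurry_left hAmeas),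
      inter_eq_left.2 (hB t ht), hφpres t A hAmeas]
  calc _ = ∫⁻ t in Icc T₀ T₁, μ.restrict B (φ t ⁻¹' A) := Measure.prod_apply (hφmeas hAmeas)
    _ = ENNReal.ofReal (T₁ - T₀) * μ A := by
      rw [setLIntegral_congr_fun measurableSet_Icc hslice, setLIntegral_const, Real.volume_Icc,
        mul_comm]

lemma restrict_prod_apply_uncurry_preimage_le (ν : Measure X) [SFinite ν]
    (hφadd : ∀ s t : ℝ, φ (s + t) = φ s ∘ φ t) (hφmeas : Measurable (Function.uncurry φ))
    (hAmeas : MeasurableSet A) (hT₀ : 0 ≤ T₀) (hA : ∀ x ∈ A, ∀ t ∈ Icc T₀ T₁, φ (-t) x ∉ A) :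
    (volume.restrict (Icc T₀ T₁)).prod ν (Function.uncurry φ ⁻¹' A) ≤
      ENNReal.ofReal T₀ * ν univ := by
  have hslice : ∀ x, volume.restrict (Icc T₀ T₁) ((·, x) ⁻¹' (Function.uncurry φ ⁻¹' A)) ≤
      ENNReal.ofReal T₀ := fun x => by
    rw [Measure.restrict_apply' measurableSet_Icc, inter_comm]
    exact volume_visitTimes_le hφadd hT₀ hA x
  calc _ = ∫⁻ x, volume.restrict (Icc T₀ T₁) ((·, x) ⁻¹' (Function.uncurry φ ⁻¹' A)) ∂ν :=
        Measure.prod_apply_symm (hφmeas hAmeas)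
    _ ≤ ∫⁻ _, ENNReal.ofReal T₀ ∂ν := lintegral_mono hslice
    _ = ENNReal.ofReal T₀ * ν univ := lintegral_const _

end Measure

theorem stmt_13_general {X : Type*} [MeasurableSpace X] (μ : Measure X)
    (φ : ℝ → X → X) (hφadd : ∀ s t : ℝ, φ (s + t) = φ s ∘ φ t)
    (hφmeas : Measurable fun p : ℝ × X => φ p.1 p.2)
    (hφpres : ∀ (t : ℝ) (A : Set X), MeasurableSet A → μ (φ t ⁻¹' A) = μ A)
    (A : Set X) (hAmeas : MeasurableSet A)
    (T₀ T₁ : ℝ) (hT₀ : 0 < T₀)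
    (hA : ∀ x ∈ A, ∀ t ∈ Set.Icc T₀ T₁, φ (-t) x ∉ A)
    (B : Set X)
    (hB : ∀ t ∈ Set.Icc T₀ T₁, φ t ⁻¹' A ⊆ B) :
    ENNReal.ofReal (T₁ - T₀) * μ A ≤ ENNReal.ofReal T₀ * μ B := by
  rcases eq_or_ne (μ B) ⊤ with hBtop | hBfin
  · simp [hBtop, ENNReal.mul_top (ENNReal.ofReal_pos.mpr hT₀).ne']
  have : IsFiniteMeasure (μ.restrict B) := ⟨by simpa using hBfin.lt_top⟩
  calc ENNReal.ofReal (T₁ - T₀) * μ A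
      = (volume.restrict (Icc T₀ T₁)).prod (μ.restrict B) (Function.uncurry φ ⁻¹' A) :=
        (restrict_prod_apply_uncurry_preimage_eq hφmeas hφpres hAmeas hB).symm
    _ ≤ ENNReal.ofReal T₀ * μ.restrict B univ :=
        restrict_prod_apply_uncurry_preimage_le _ hφadd hφmeas hAmeas hT₀.le hA
    _ = ENNReal.ofReal T₀ * μ B := by rw [Measure.restrict_apply_univ]

/-- Key step in the proof of Lemma 3.6: for a measure-preserving flow `φ`, if the set
`A` cannot be revisited after any time lag in `[T₀, T₁]` and `B` contains all the
preimages `φ_t⁻¹(A)` for `t ∈ [T₀, T₁]`, then `(T₁ - T₀)·μ(A) ≤ T₀·μ(B)`. -/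
theorem stmt_13 {X : Type*} [MeasurableSpace X] (μ : Measure X)
    (φ : ℝ → X → X) (hφ0 : φ 0 = id) (hφadd : ∀ s t : ℝ, φ (s + t) = φ s ∘ φ t)
    (hφmeas : Measurable fun p : ℝ × X => φ p.1 p.2)
    (hφpres : ∀ (t : ℝ) (A : Set X), MeasurableSet A → μ (φ t ⁻¹' A) = μ A)
    (A : Set X) (hAmeas : MeasurableSet A)
    (T₀ T₁ : ℝ) (hT₀ : 0 < T₀) (hT : T₀ ≤ T₁)
    (hA : ∀ x ∈ A, ∀ t ∈ Set.Icc T₀ T₁, φ (-t) x ∉ A)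
    (B : Set X) (hBmeas : MeasurableSet B)
    (hB : ∀ t ∈ Set.Icc T₀ T₁, φ t ⁻¹' A ⊆ B) :
    ENNReal.ofReal (T₁ - T₀) * μ A ≤ ENNReal.ofReal T₀ * μ B :=
  stmt_13_general μ φ hφadd hφmeas hφpres A hAmeas T₀ T₁ hT₀ hA B hB
end

section
/- Let d ≥ 1, let x, ξ ∈ ℝ^d with ‖x‖ = R > 0 and ‖ξ‖ = 1, and suppose ⟨x, ξ⟩ > 0 and ‖x − ⟨x,ξ⟩·ξ‖ ≤ 1. Let η := ξ − (2⟨x, ξ⟩/R²)·x (the specular reflection of ξ in the tangent hyperplane to the sphere of radius R at the point x). Then ‖x + ⟨x,ξ⟩·η‖ ≤ 1; in particular the reflected ray {x + tη : t > 0} meets the closed unit ball. -/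
open scoped RealInnerProductSpace

/-- Point (iv)′ of Lemma 5.8: a ray whose incoming line passes within distance `1` of
the origin, after specular reflection from the sphere of radius `R` at non-tangential
incidence, returns to the closed unit ball; quantitatively, at time `⟨x,ξ⟩` along the
reflected direction `η = ξ - (2⟨x,ξ⟩/R²)x` the point `x + ⟨x,ξ⟩η` lies in the closed
unit ball. -/
theorem stmt_18 (d : ℕ) (hd : 1 ≤ d)
    (x ξ : EuclideanSpace ℝ (Fin d)) (R : ℝ) (hR : 0 < R) (hx : ‖x‖ = R)
    (hξ : ‖ξ‖ = 1) (hpos : 0 < ⟪x, ξ⟫)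
    (hperp : ‖x - ⟪x, ξ⟫ • ξ‖ ≤ 1) :
    ‖x + ⟪x, ξ⟫ • (ξ - (2 * ⟪x, ξ⟫ / R ^ 2) • x)‖ ≤ 1 ∧
      ∃ t : ℝ, 0 < t ∧
        x + t • (ξ - (2 * ⟪x, ξ⟫ / R ^ 2) • x) ∈
          Metric.closedBall (0 : EuclideanSpace ℝ (Fin d)) 1 := by
  set a : ℝ := ⟪x, ξ⟫ with ha
  have hsq : ‖x + a • (ξ - (2 * a / R ^ 2) • x)‖ ^ 2 = ‖x - a • ξ‖ ^ 2 := by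
    have h1 : ‖x + a • (ξ - (2 * a / R ^ 2) • x)‖ ^ 2
        = ‖x‖ ^ 2 + 2 * ⟪x, a • (ξ - (2 * a / R ^ 2) • x)⟫
          + ‖a • (ξ - (2 * a / R ^ 2) • x)‖ ^ 2 := norm_add_sq_real _ _
    have h2 : ‖x - a • ξ‖ ^ 2 = ‖x‖ ^ 2 - 2 * ⟪x, a • ξ⟫ + ‖a • ξ‖ ^ 2 :=
      norm_sub_sq_real _ _
    have h3 : ‖a • (ξ - (2 * a / R ^ 2) • x)‖ ^ 2
        = a ^ 2 * (‖ξ‖ ^ 2 - 2 * (2 * a / R ^ 2) * ⟪ξ, x⟫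
            + (2 * a / R ^ 2) ^ 2 * ‖x‖ ^ 2) := by
      rw [norm_smul, Real.norm_eq_abs, mul_pow, sq_abs, norm_sub_sq_real,
        real_inner_smul_right, norm_smul, Real.norm_eq_abs, mul_pow, sq_abs]
      ring
    have h4 : ⟪x, a • (ξ - (2 * a / R ^ 2) • x)⟫
        = a * (a - (2 * a / R ^ 2) * ‖x‖ ^ 2) := by
      rw [real_inner_smul_right, inner_sub_right, real_inner_smul_right,
        real_inner_self_eq_norm_sq, ← ha]
    have h5 : ⟪x, a • ξ⟫ = a * a := by
      rw [real_inner_smul_right, ← ha]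
    have h6 : ‖a • ξ‖ ^ 2 = a ^ 2 * ‖ξ‖ ^ 2 := by
      rw [norm_smul]; simp [Real.norm_eq_abs, mul_pow, sq_abs]
    have hix : ⟪ξ, x⟫ = a := by rw [real_inner_comm]
    rw [h1, h2, h3, h4, h5, h6, hx, hξ, hix]
    have hR2 : R ^ 2 ≠ 0 := by positivity
    field_simp
    ring
  have hnorm : ‖x + a • (ξ - (2 * a / R ^ 2) • x)‖ ≤ 1 := by
    nlinarith [norm_nonneg (x + a • (ξ - (2 * a / R ^ 2) • x)), norm_nonneg (x - a • ξ)]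
  refine ⟨hnorm, a, hpos, ?_⟩
  simpa [Metric.mem_closedBall, dist_eq_norm] using hnorm
end
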